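/- Let (A, ·, (ω,ω')) be a symmetric twisted partial H-module algebra. Then for all h,k,m ∈ H: h·ω(k,m) = Σ ω(h₍₁₎,k₍₁₎) ω(h₍₂₎k₍₂₎,m₍₁₎) ω'(h₍₃₎,k₍₃₎m₍₂₎). -/

import Mathlib

/-!
In the convolution algebra `Hom(H ⊗ H ⊗ H, A)` consider
`U = actCocycle : h ⊗ l ⊗ m ↦ h·ω(l,m)`, `V = cocycleMulRight : ω(h,lm)`,
`W = invMulRight : ω'(h,lm)`, `E = actMulOne : h·(lm·1)`, `Y = cocycleCounit : ε(m) ω(h,l)` and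
`Z = cocycleMulLeft : ω(hl,m)`. The axioms say `V * W = E` (from `ω * ω' = f₁ * f₂` and
`h·(x·1) = Σ (h₁·1)(h₂x·1)`) and `U * E = U` (from `ω(l,m) = Σ ω(l₁,m₁)(l₂m₂·1)` and
multiplicativity of the action), and the cocycle identity is `U * V = Y * Z`. By associativity,
`U = U * (V * W) = (Y * Z) * W = Y * (Z * W)`; evaluated at `h ⊗ l ⊗ m`, the counit in `Y`
absorbs the first split of `m`, leaving exactly the right-hand side.
-/

open TensorProduct

noncomputable section

/-- A twisted partial action `(α, ω)` of a Hopf algebra `H` on a unital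
algebra `A` (Definition 2.1 of Alves–Batista–Dokuchaev–Paques).  Sweedler sums
are expressed by quantifying over arbitrary finite representations of the
comultiplication. -/
structure TwistedPartialAction (k H A : Type) [CommRing k]
    [Ring H] [HopfAlgebra k H] [Ring A] [Algebra k A] where
  act : H →ₗ[k] A →ₗ[k] A
  cocycle : H →ₗ[k] H →ₗ[k] A
  /-- `1_H · a = a` -/
  act_one : ∀ a : A, act 1 a = a
  /-- `h · (ab) = Σ (h₁ · a)(h₂ · b)` -/
  act_mul : ∀ (h : H) (a b : A) (ι : Type) (s : Finset ι) (h1 h2 : ι → H),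
    Coalgebra.comul (R := k) h = ∑ i ∈ s, h1 i ⊗ₜ[k] h2 i →
    act h (a * b) = ∑ i ∈ s, act (h1 i) a * act (h2 i) b
  /-- `Σ (h₁ · (l₁ · a)) ω(h₂, l₂) = Σ ω(h₁, l₁)(h₂ l₂ · a)` -/
  twisted : ∀ (h l : H) (a : A) (ι κ : Type) (s : Finset ι) (t : Finset κ)
    (h1 h2 : ι → H) (l1 l2 : κ → H),
    Coalgebra.comul (R := k) h = ∑ i ∈ s, h1 i ⊗ₜ[k] h2 i →
    Coalgebra.comul (R := k) l = ∑ j ∈ t, l1 j ⊗ₜ[k] l2 j →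
    ∑ i ∈ s, ∑ j ∈ t, act (h1 i) (act (l1 j) a) * cocycle (h2 i) (l2 j) =
      ∑ i ∈ s, ∑ j ∈ t, cocycle (h1 i) (l1 j) * act (h2 i * l2 j) a
  /-- `ω(h,l) = Σ ω(h₁, l₁)(h₂ l₂ · 1)` -/
  cocycle_absorb : ∀ (h l : H) (ι κ : Type) (s : Finset ι) (t : Finset κ)
    (h1 h2 : ι → H) (l1 l2 : κ → H),
    Coalgebra.comul (R := k) h = ∑ i ∈ s, h1 i ⊗ₜ[k] h2 i →
    Coalgebra.comul (R := k) l = ∑ j ∈ t, l1 j ⊗ₜ[k] l2 j →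
    cocycle h l = ∑ i ∈ s, ∑ j ∈ t, cocycle (h1 i) (l1 j) * act (h2 i * l2 j) 1

/-- A symmetric twisted partial action (Definition 4.2): the maps
`f₁(h⊗l) = (h·1)ε(l)` and `f₂(h⊗l) = (hl·1)` are central in the convolution
algebra `Hom(H ⊗ H, A)`, the cocycle `ω` is normalized, satisfies the cocycle
identity, and is invertible in the ideal `⟨f₁ * f₂⟩` with inverse `ω'`
(called `inv` below), and `h·(l·1) = Σ (h₁·1)(h₂l·1)`. -/
structure SymmetricTwistedPartialAction (k H A : Type) [CommRing k]
    [Ring H] [HopfAlgebra k H] [Ring A] [Algebra k A]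
    extends TwistedPartialAction k H A where
  inv : H →ₗ[k] H →ₗ[k] A
  f1_central : ∀ (T : H →ₗ[k] H →ₗ[k] A) (h l : H) (ι κ : Type)
    (s : Finset ι) (t : Finset κ) (h1 h2 : ι → H) (l1 l2 : κ → H),
    Coalgebra.comul (R := k) h = ∑ i ∈ s, h1 i ⊗ₜ[k] h2 i →
    Coalgebra.comul (R := k) l = ∑ j ∈ t, l1 j ⊗ₜ[k] l2 j →
    ∑ i ∈ s, ∑ j ∈ t,
        (Coalgebra.counit (R := k) (l1 j) • act (h1 i) 1) * T (h2 i) (l2 j) =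
      ∑ i ∈ s, ∑ j ∈ t,
        T (h1 i) (l1 j) * (Coalgebra.counit (R := k) (l2 j) • act (h2 i) 1)
  f2_central : ∀ (T : H →ₗ[k] H →ₗ[k] A) (h l : H) (ι κ : Type)
    (s : Finset ι) (t : Finset κ) (h1 h2 : ι → H) (l1 l2 : κ → H),
    Coalgebra.comul (R := k) h = ∑ i ∈ s, h1 i ⊗ₜ[k] h2 i →
    Coalgebra.comul (R := k) l = ∑ j ∈ t, l1 j ⊗ₜ[k] l2 j →
    ∑ i ∈ s, ∑ j ∈ t, act (h1 i * l1 j) 1 * T (h2 i) (l2 j) =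
      ∑ i ∈ s, ∑ j ∈ t, T (h1 i) (l1 j) * act (h2 i * l2 j) 1
  norm_right : ∀ h : H, cocycle h 1 = act h 1
  norm_left : ∀ h : H, cocycle 1 h = act h 1
  /-- the cocycle identity (9):
  `Σ (h₁·ω(l₁,m₁)) ω(h₂, l₂m₂) = Σ ω(h₁,l₁) ω(h₂l₂, m)` -/
  cocycle_id : ∀ (h l m : H) (ι κ ν : Type) (s : Finset ι) (t : Finset κ)
    (r : Finset ν) (h1 h2 : ι → H) (l1 l2 : κ → H) (m1 m2 : ν → H),
    Coalgebra.comul (R := k) h = ∑ i ∈ s, h1 i ⊗ₜ[k] h2 i →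
    Coalgebra.comul (R := k) l = ∑ j ∈ t, l1 j ⊗ₜ[k] l2 j →
    Coalgebra.comul (R := k) m = ∑ p ∈ r, m1 p ⊗ₜ[k] m2 p →
    ∑ i ∈ s, ∑ j ∈ t, ∑ p ∈ r,
        act (h1 i) (cocycle (l1 j) (m1 p)) * cocycle (h2 i) (l2 j * m2 p) =
      ∑ i ∈ s, ∑ j ∈ t, cocycle (h1 i) (l1 j) * cocycle (h2 i * l2 j) m
  /-- `ω' * f₁ = ω'` -/
  inv_absorb_f1 : ∀ (h l : H) (ι κ : Type) (s : Finset ι) (t : Finset κ)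
    (h1 h2 : ι → H) (l1 l2 : κ → H),
    Coalgebra.comul (R := k) h = ∑ i ∈ s, h1 i ⊗ₜ[k] h2 i →
    Coalgebra.comul (R := k) l = ∑ j ∈ t, l1 j ⊗ₜ[k] l2 j →
    ∑ i ∈ s, ∑ j ∈ t,
        inv (h1 i) (l1 j) * (Coalgebra.counit (R := k) (l2 j) • act (h2 i) 1) =
      inv h l
  /-- `ω' * f₂ = ω'` -/
  inv_absorb_f2 : ∀ (h l : H) (ι κ : Type) (s : Finset ι) (t : Finset κ)
    (h1 h2 : ι → H) (l1 l2 : κ → H),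
    Coalgebra.comul (R := k) h = ∑ i ∈ s, h1 i ⊗ₜ[k] h2 i →
    Coalgebra.comul (R := k) l = ∑ j ∈ t, l1 j ⊗ₜ[k] l2 j →
    inv h l = ∑ i ∈ s, ∑ j ∈ t, inv (h1 i) (l1 j) * act (h2 i * l2 j) 1
  /-- `ω * ω' = f₁ * f₂` -/
  cocycle_inv : ∀ (h l : H) (ι κ : Type) (s : Finset ι) (t : Finset κ)
    (h1 h2 : ι → H) (l1 l2 : κ → H),
    Coalgebra.comul (R := k) h = ∑ i ∈ s, h1 i ⊗ₜ[k] h2 i →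
    Coalgebra.comul (R := k) l = ∑ j ∈ t, l1 j ⊗ₜ[k] l2 j →
    ∑ i ∈ s, ∑ j ∈ t, cocycle (h1 i) (l1 j) * inv (h2 i) (l2 j) =
      ∑ i ∈ s, act (h1 i) 1 * act (h2 i * l) 1
  /-- `ω' * ω = f₁ * f₂` -/
  inv_cocycle : ∀ (h l : H) (ι κ : Type) (s : Finset ι) (t : Finset κ)
    (h1 h2 : ι → H) (l1 l2 : κ → H),
    Coalgebra.comul (R := k) h = ∑ i ∈ s, h1 i ⊗ₜ[k] h2 i →
    Coalgebra.comul (R := k) l = ∑ j ∈ t, l1 j ⊗ₜ[k] l2 j →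
    ∑ i ∈ s, ∑ j ∈ t, inv (h1 i) (l1 j) * cocycle (h2 i) (l2 j) =
      ∑ i ∈ s, act (h1 i) 1 * act (h2 i * l) 1
  /-- `h · (l · 1) = Σ (h₁ · 1)(h₂ l · 1)` -/
  act_act_one : ∀ (h l : H) (ι : Type) (s : Finset ι) (h1 h2 : ι → H),
    Coalgebra.comul (R := k) h = ∑ i ∈ s, h1 i ⊗ₜ[k] h2 i →
    act h (act l 1) = ∑ i ∈ s, act (h1 i) 1 * act (h2 i * l) 1

open Coalgebra WithConv

theorem WithConv.ext_threefold' {R M N P Q : Type*} [CommSemiring R] [AddCommMonoid M]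
    [AddCommMonoid N] [AddCommMonoid P] [AddCommMonoid Q] [Module R M] [Module R N] [Module R P]
    [Module R Q] {f g : WithConv (M ⊗[R] (N ⊗[R] P) →ₗ[R] Q)}
    (H : ∀ x y z, f (x ⊗ₜ (y ⊗ₜ z)) = g (x ⊗ₜ (y ⊗ₜ z))) : f = g :=
  WithConv.ext (TensorProduct.ext_threefold' H)

theorem Coalgebra.Repr.convMul_tmul_tmul_apply {k C A ι κ ν : Type*} [CommSemiring k]
    [Semiring C] [Bialgebra k C] [Semiring A] [Algebra k A] {x y z : C}
    (ℛx : Repr k x ι) (ℛy : Repr k y κ) (ℛz : Repr k z ν)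
    (f g : WithConv (C ⊗[k] (C ⊗[k] C) →ₗ[k] A)) :
    (f * g) (x ⊗ₜ (y ⊗ₜ z)) =
      ∑ i ∈ ℛx.index, ∑ p ∈ ℛy.index, ∑ n ∈ ℛz.index,
        f (ℛx.left i ⊗ₜ (ℛy.left p ⊗ₜ ℛz.left n)) *
          g (ℛx.right i ⊗ₜ (ℛy.right p ⊗ₜ ℛz.right n)) := by
  simp [(ℛx.tmul (ℛy.tmul ℛz)).convMul_apply, Finset.sum_product]

namespace TwistedPartialAction

variable {k H A : Type} [CommRing k] [Ring H] [HopfAlgebra k H] [Ring A] [Algebra k A]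
  (P : TwistedPartialAction k H A)

def actCocycle : WithConv (H ⊗[k] (H ⊗[k] H) →ₗ[k] A) :=
  toConv (TensorProduct.lift (P.act.compl₂ (TensorProduct.lift P.cocycle)))

def actMulOne : WithConv (H ⊗[k] (H ⊗[k] H) →ₗ[k] A) :=
  toConv (TensorProduct.lift (P.act.compl₂ (P.act.flip 1 ∘ₗ LinearMap.mul' k H)))

def cocycleMulRight : WithConv (H ⊗[k] (H ⊗[k] H) →ₗ[k] A) :=
  toConv (TensorProduct.lift (P.cocycle.compl₂ (LinearMap.mul' k H)))

def cocycleMulLeft : WithConv (H ⊗[k] (H ⊗[k] H) →ₗ[k] A) :=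
  toConv (TensorProduct.lift P.cocycle ∘ₗ (LinearMap.mul' k H).rTensor H ∘ₗ
    (TensorProduct.assoc k H H H).symm.toLinearMap)

def cocycleCounit : WithConv (H ⊗[k] (H ⊗[k] H) →ₗ[k] A) :=
  toConv (TensorProduct.lift (P.cocycle.compl₂ (TensorProduct.rid k H ∘ₗ counit.lTensor H)))

@[simp] lemma actCocycle_tmul (h l m : H) :
    P.actCocycle (h ⊗ₜ (l ⊗ₜ m)) = P.act h (P.cocycle l m) := by
  simp [actCocycle]

@[simp] lemma actMulOne_tmul (h l m : H) :
    P.actMulOne (h ⊗ₜ (l ⊗ₜ m)) = P.act h (P.act (l * m) 1) := by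
  simp [actMulOne]

@[simp] lemma cocycleMulRight_tmul (h l m : H) :
    P.cocycleMulRight (h ⊗ₜ (l ⊗ₜ m)) = P.cocycle h (l * m) := by
  simp [cocycleMulRight]

@[simp] lemma cocycleMulLeft_tmul (h l m : H) :
    P.cocycleMulLeft (h ⊗ₜ (l ⊗ₜ m)) = P.cocycle (h * l) m := by
  simp [cocycleMulLeft]

@[simp] lemma cocycleCounit_tmul (h l m : H) :
    P.cocycleCounit (h ⊗ₜ (l ⊗ₜ m)) = counit (R := k) m • P.cocycle h l := by
  simp [cocycleCounit]

theorem actCocycle_convMul_actMulOne : P.actCocycle * P.actMulOne = P.actCocycle := by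
  refine WithConv.ext_threefold' fun h l m => ?_
  let ℛh := ℛ k h; let ℛl := ℛ k l; let ℛm := ℛ k m
  rw [ℛh.convMul_tmul_tmul_apply ℛl ℛm, actCocycle_tmul,
    P.cocycle_absorb l m _ _ ℛl.index ℛm.index ℛl.left ℛl.right ℛm.left ℛm.right ℛl.eq.symm
      ℛm.eq.symm]
  simp only [map_sum, actCocycle_tmul, actMulOne_tmul,
    P.act_mul h _ _ _ ℛh.index ℛh.left ℛh.right ℛh.eq.symm]
  exact Finset.sum_comm_cycle.symm

theorem cocycleCounit_convMul_apply {h l : H} {ι κ : Type*} (ℛh : Repr k h ι) (ℛl : Repr k l κ)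
    (m : H) (T : WithConv (H ⊗[k] (H ⊗[k] H) →ₗ[k] A)) :
    (P.cocycleCounit * T) (h ⊗ₜ (l ⊗ₜ m)) =
      ∑ i ∈ ℛh.index, ∑ p ∈ ℛl.index,
        P.cocycle (ℛh.left i) (ℛl.left p) * T (ℛh.right i ⊗ₜ (ℛl.right p ⊗ₜ m)) := by
  let ℛm := ℛ k m
  rw [ℛh.convMul_tmul_tmul_apply ℛl ℛm]
  refine Finset.sum_congr rfl fun i _ => Finset.sum_congr rfl fun p _ => ?_
  conv_rhs => rw [← sum_counit_smul ℛm]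
  simp only [cocycleCounit_tmul, TensorProduct.tmul_sum, TensorProduct.tmul_smul, map_sum,
    map_smul, smul_mul_assoc, mul_smul_comm, Finset.mul_sum]

end TwistedPartialAction

namespace SymmetricTwistedPartialAction

variable {k H A : Type} [CommRing k] [Ring H] [HopfAlgebra k H] [Ring A] [Algebra k A]
  (P : SymmetricTwistedPartialAction k H A)

def invMulRight : WithConv (H ⊗[k] (H ⊗[k] H) →ₗ[k] A) :=
  toConv (TensorProduct.lift (P.inv.compl₂ (LinearMap.mul' k H)))

@[simp] lemma invMulRight_tmul (h l m : H) :
    P.invMulRight (h ⊗ₜ (l ⊗ₜ m)) = P.inv h (l * m) := by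
  simp [invMulRight]

theorem cocycleMulRight_convMul_invMulRight :
    P.cocycleMulRight * P.invMulRight = P.actMulOne := by
  refine WithConv.ext_threefold' fun h l m => ?_
  let ℛh := ℛ k h; let ℛl := ℛ k l; let ℛm := ℛ k m
  let ℛlm := ℛl.mul ℛm
  rw [ℛh.convMul_tmul_tmul_apply ℛl ℛm, P.actMulOne_tmul,
    P.act_act_one h _ _ ℛh.index ℛh.left ℛh.right ℛh.eq.symm,
    ← P.cocycle_inv h (l * m) _ _ ℛh.index ℛlm.index ℛh.left ℛh.right ℛlm.left ℛlm.right
      ℛh.eq.symm ℛlm.eq.symm]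
  simp [ℛlm, Finset.sum_product]

theorem actCocycle_convMul_cocycleMulRight :
    P.actCocycle * P.cocycleMulRight = P.cocycleCounit * P.cocycleMulLeft := by
  refine WithConv.ext_threefold' fun h l m => ?_
  let ℛh := ℛ k h; let ℛl := ℛ k l; let ℛm := ℛ k m
  rw [ℛh.convMul_tmul_tmul_apply ℛl ℛm, P.cocycleCounit_convMul_apply ℛh ℛl]
  simpa using P.cocycle_id h l m _ _ _ ℛh.index ℛl.index ℛm.index ℛh.left ℛh.right ℛl.left
    ℛl.right ℛm.left ℛm.right ℛh.eq.symm ℛl.eq.symm ℛm.eq.symm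

theorem actCocycle_eq_cocycleCounit_convMul :
    P.actCocycle = P.cocycleCounit * (P.cocycleMulLeft * P.invMulRight) := by
  rw [← mul_assoc, ← P.actCocycle_convMul_cocycleMulRight, mul_assoc,
    P.cocycleMulRight_convMul_invMulRight, P.actCocycle_convMul_actMulOne]

end SymmetricTwistedPartialAction

theorem symm_act_cocycle
    {k H A : Type} [CommRing k] [Ring H] [HopfAlgebra k H]
    [Ring A] [Algebra k A] (P : SymmetricTwistedPartialAction k H A) :
    ∀ (h l m : H) (ι ι' κ κ' ν : Type) (s : Finset ι)
      (s' : ι → Finset ι') (t : Finset κ) (t' : κ → Finset κ') (r : Finset ν)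
      (h1 h2 : ι → H) (h21 h22 : ι → ι' → H)
      (l1 l2 : κ → H) (l21 l22 : κ → κ' → H) (m1 m2 : ν → H),
      Coalgebra.comul (R := k) h = ∑ i ∈ s, h1 i ⊗ₜ[k] h2 i →
      (∀ i ∈ s, Coalgebra.comul (R := k) (h2 i) =
        ∑ j ∈ s' i, h21 i j ⊗ₜ[k] h22 i j) →
      Coalgebra.comul (R := k) l = ∑ p ∈ t, l1 p ⊗ₜ[k] l2 p →
      (∀ p ∈ t, Coalgebra.comul (R := k) (l2 p) =
        ∑ q ∈ t' p, l21 p q ⊗ₜ[k] l22 p q) →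
      Coalgebra.comul (R := k) m = ∑ n ∈ r, m1 n ⊗ₜ[k] m2 n →
      P.act h (P.cocycle l m) =
        ∑ i ∈ s, ∑ j ∈ s' i, ∑ p ∈ t, ∑ q ∈ t' p, ∑ n ∈ r,
          P.cocycle (h1 i) (l1 p) * P.cocycle (h21 i j * l21 p q) (m1 n) *
            P.inv (h22 i j) (l22 p q * m2 n) := by
  intro h l m ι ι' κ κ' ν s s' t t' r h1 h2 h21 h22 l1 l2 l21 l22 m1 m2 hh hh2 hl hl2 hm
  rw [← P.actCocycle_tmul, P.actCocycle_eq_cocycleCounit_convMul,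
    P.cocycleCounit_convMul_apply ⟨s, h1, h2, hh.symm⟩ ⟨t, l1, l2, hl.symm⟩]
  refine Finset.sum_congr rfl fun i hi => ?_
  rw [Finset.sum_comm (s := s' i)]
  refine Finset.sum_congr rfl fun p hp => ?_
  rw [Repr.convMul_tmul_tmul_apply ⟨s' i, h21 i, h22 i, (hh2 i hi).symm⟩
    ⟨t' p, l21 p, l22 p, (hl2 p hp).symm⟩ ⟨r, m1, m2, hm.symm⟩]
  simp [Finset.mul_sum, mul_assoc]
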